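/- Suppose f_1,...,f_N : [0,1] → (0,1) are continuously differentiable and there exist continuously differentiable nowhere-vanishing functions g_1,h_1,...,g_m,h_m : [0,1] → (0,∞) such that for all x,y in [0,1], ∑_{i=1}^N log f_i(x) log(1 - f_i(y)) = ∑_{j=1}^m (log g_j(x) log h_j(y) + log h_j(x) log g_j(y)). Then ∑_{i=1}^N L(f_i(0)) = ∑_{i=1}^N L(f_i(1)), where L is the Rogers dilogarithm. -/

import Mathlib

/-!
By the chain rule, `2 (d/dx) ∑ᵢ L(fᵢ x) = ∑ᵢ (log fᵢ · (log (1 - fᵢ))' - log (1 - fᵢ) · (log fᵢ)')`.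
The hypothesis makes `B(x, y) = ∑ᵢ log fᵢ(x) log (1 - fᵢ(y))` symmetric, and differentiating
`B(x, y) = B(y, x)` in `y` at `y = x` shows that this sum vanishes. Hence `∑ᵢ L ∘ fᵢ` is constant
on `[0, 1]`.
-/

open scoped Real

/-- The Rogers dilogarithm on `[0,1]`. -/
noncomputable def rogersL (z : ℝ) : ℝ :=
  -(1 / 2) * ∫ t in (0:ℝ)..z, (Real.log (1 - t) / t + Real.log t / (1 - t))

open Set MeasureTheory Real

lemma intervalIntegrable_log_one_sub_div {a b : ℝ} (ha : a < 1) (hb : b < 1) :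
    IntervalIntegrable (fun t => log (1 - t) / t) volume a b := by
  -- Off `0` the integrand is the difference quotient of `log (1 - t)` at `0`.
  have hcont : ContinuousOn (dslope (fun t => log (1 - t)) 0) (Iio 1) := by
    refine (continuousOn_dslope (Iio_mem_nhds one_pos)).2 ⟨?_, ?_⟩
    · exact ContinuousOn.log (by fun_prop) fun t ht => sub_ne_zero.2 (ne_of_gt ht)
    · exact (((hasDerivAt_id (0:ℝ)).const_sub 1).log (by norm_num)).differentiableAt
  refine (hcont.mono fun t ht => ?_).intervalIntegrable.congr_ae ?_
  · exact lt_of_le_of_lt ht.2 (max_lt ha hb)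
  · filter_upwards [ae_restrict_of_ae (volume.ae_ne 0)] with t ht
    simp [dslope_of_ne _ ht, slope_def_field]

lemma intervalIntegrable_log_div_one_sub {a b : ℝ} (ha : a < 1) (hb : b < 1) :
    IntervalIntegrable (fun t => log t / (1 - t)) volume a b := by
  have hinv : ContinuousOn (fun t : ℝ => (1 - t)⁻¹) (uIcc a b) :=
    ContinuousOn.inv₀ (by fun_prop) fun t ht =>
      sub_ne_zero.2 (ne_of_gt (lt_of_le_of_lt ht.2 (max_lt ha hb)))
  simpa only [div_eq_mul_inv] using intervalIntegral.intervalIntegrable_log'.mul_continuousOn hinv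

lemma hasDerivAt_rogersL {z : ℝ} (h0 : 0 < z) (h1 : z < 1) :
    HasDerivAt rogersL ((log z * -(1 - z)⁻¹ - log (1 - z) * z⁻¹) / 2) z := by
  have hcont : ContinuousOn (fun t => log (1 - t) / t + log t / (1 - t)) (Ioo 0 1) := by
    refine ContinuousOn.add ?_ ?_
    · exact (ContinuousOn.log (by fun_prop) fun t ht => sub_ne_zero.2 (ne_of_gt ht.2)).div
        continuousOn_id fun t ht => ht.1.ne'
    · exact (continuousOn_log.mono fun t ht => ht.1.ne').div (by fun_prop)
        fun t ht => sub_ne_zero.2 (ne_of_gt ht.2)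
  have hz : z ∈ Ioo (0:ℝ) 1 := ⟨h0, h1⟩
  have hint := intervalIntegral.integral_hasDerivAt_right
    ((intervalIntegrable_log_one_sub_div zero_lt_one h1).add
      (intervalIntegrable_log_div_one_sub zero_lt_one h1))
    (hcont.stronglyMeasurableAtFilter isOpen_Ioo z hz)
    (hcont.continuousAt (isOpen_Ioo.mem_nhds hz))
  exact (hint.const_mul (-(1 / 2) : ℝ)).congr_deriv (by ring)

/-- The chain rule for `L ∘ f`, in the form `2 dL(z) = log z d log(1 - z) - log(1 - z) d log z`. -/
lemma hasDerivWithinAt_rogersL_comp {f : ℝ → ℝ} {f' x : ℝ} {s : Set ℝ}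
    (hf : HasDerivWithinAt f f' s x) (h0 : 0 < f x) (h1 : f x < 1) :
    HasDerivWithinAt (fun y => rogersL (f y))
      ((log (f x) * (-f' / (1 - f x)) - log (1 - f x) * (f' / f x)) / 2) s x :=
  ((hasDerivAt_rogersL h0 h1).comp_hasDerivWithinAt x hf).congr_deriv (by ring)

/-- Differentiating the symmetry of `(x, y) ↦ ∑ uᵢ(x) vᵢ(y)` in one variable on the diagonal. -/
theorem sum_mul_deriv_sub_mul_deriv_eq_zero_of_symmetric {ι : Type*} [Fintype ι]
    {u v : ι → ℝ → ℝ} {u' v' : ι → ℝ} {s : Set ℝ} {x : ℝ}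
    (hu : ∀ i, HasDerivWithinAt (u i) (u' i) s x) (hv : ∀ i, HasDerivWithinAt (v i) (v' i) s x)
    (hs : UniqueDiffWithinAt ℝ s x)
    (hsymm : ∀ y ∈ s, ∑ i, u i x * v i y = ∑ i, u i y * v i x) :
    ∑ i, (u i x * v' i - v i x * u' i) = 0 := by
  set P : ℝ → ℝ := fun y => ∑ i, (u i x * v i y - v i x * u i y)
  have hP : HasDerivWithinAt P (∑ i, (u i x * v' i - v i x * u' i)) s x :=
    HasDerivWithinAt.fun_sum fun i _ => ((hv i).const_mul _).sub ((hu i).const_mul _)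
  have hP0 : HasDerivWithinAt P 0 s x := by
    refine (hasDerivWithinAt_const x s 0).congr (fun y hy => ?_) ?_
    · simp [P, Finset.sum_sub_distrib, hsymm y hy, mul_comm]
    · simp [P, mul_comm]
  exact hs.eq_deriv s hP hP0

theorem rogers_sum_endpoints_general (N m : ℕ) (f : Fin N → ℝ → ℝ) (g h : Fin m → ℝ → ℝ)
    (hf : ∀ i, ContDiffOn ℝ 1 (f i) (Set.Icc 0 1))
    (hfrange : ∀ i, ∀ x ∈ Set.Icc (0:ℝ) 1, 0 < f i x ∧ f i x < 1)
    (hsym : ∀ x ∈ Set.Icc (0:ℝ) 1, ∀ y ∈ Set.Icc (0:ℝ) 1,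
      ∑ i, Real.log (f i x) * Real.log (1 - f i y)
        = ∑ j, (Real.log (g j x) * Real.log (h j y) + Real.log (h j x) * Real.log (g j y))) :
    ∑ i, rogersL (f i 0) = ∑ i, rogersL (f i 1) := by
  have hderiv : ∀ x ∈ Icc (0:ℝ) 1,
      HasDerivWithinAt (fun y => ∑ i, rogersL (f i y)) 0 (Icc 0 1) x := by
    intro x hx
    have hfx : ∀ i, HasDerivWithinAt (f i) (derivWithin (f i) (Icc 0 1) x) (Icc 0 1) x :=
      fun i => ((hf i).differentiableOn one_ne_zero x hx).hasDerivWithinAt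
    have hcancel := sum_mul_deriv_sub_mul_deriv_eq_zero_of_symmetric
      (fun i => (hfx i).log (hfrange i x hx).1.ne')
      (fun i => ((hfx i).const_sub 1).log (sub_ne_zero.2 (hfrange i x hx).2.ne'))
      (uniqueDiffOn_Icc one_pos x hx) fun y hy => by
        rw [hsym x hx y hy, hsym y hy x hx]
        exact Finset.sum_congr rfl fun j _ => by ring
    have hsum := HasDerivWithinAt.fun_sum (u := Finset.univ) fun i _ =>
      hasDerivWithinAt_rogersL_comp (hfx i) (hfrange i x hx).1 (hfrange i x hx).2
    rwa [← Finset.sum_div, hcancel, zero_div] at hsum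
  have hconst := constant_of_derivWithin_zero
    (fun x hx => (hderiv x hx).differentiableWithinAt)
    (fun x hx => (hderiv x (Ico_subset_Icc_self hx)).derivWithin
      (uniqueDiffOn_Icc one_pos x (Ico_subset_Icc_self hx))) 1 (right_mem_Icc.2 zero_le_one)
  exact hconst.symm

/-- If `f₁, …, f_N : [0,1] → (0,1)` are continuously differentiable and there are
continuously differentiable nowhere-vanishing `g_j, h_j : [0,1] → (0,∞)` with
`∑ᵢ log fᵢ(x) log(1 − fᵢ(y)) = ∑ⱼ (log gⱼ(x) log hⱼ(y) + log hⱼ(x) log gⱼ(y))` for all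
`x, y ∈ [0,1]`, then `∑ᵢ L(fᵢ(0)) = ∑ᵢ L(fᵢ(1))`. -/
theorem rogers_sum_endpoints (N m : ℕ) (f : Fin N → ℝ → ℝ) (g h : Fin m → ℝ → ℝ)
    (hf : ∀ i, ContDiffOn ℝ 1 (f i) (Set.Icc 0 1))
    (hfrange : ∀ i, ∀ x ∈ Set.Icc (0:ℝ) 1, 0 < f i x ∧ f i x < 1)
    (hg : ∀ j, ContDiffOn ℝ 1 (g j) (Set.Icc 0 1))
    (hh : ∀ j, ContDiffOn ℝ 1 (h j) (Set.Icc 0 1))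
    (hgpos : ∀ j, ∀ x ∈ Set.Icc (0:ℝ) 1, 0 < g j x)
    (hhpos : ∀ j, ∀ x ∈ Set.Icc (0:ℝ) 1, 0 < h j x)
    (hsym : ∀ x ∈ Set.Icc (0:ℝ) 1, ∀ y ∈ Set.Icc (0:ℝ) 1,
      ∑ i, Real.log (f i x) * Real.log (1 - f i y)
        = ∑ j, (Real.log (g j x) * Real.log (h j y) + Real.log (h j x) * Real.log (g j y))) :
    ∑ i, rogersL (f i 0) = ∑ i, rogersL (f i 1) :=
  rogers_sum_endpoints_general N m f g h hf hfrange hsym
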